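/- For n > 1, every automorphism of an HCS(4n+1) obtained from the doubling construction fixes the vertex ∞. -/

import Mathlib

open Pointwise

variable {V : Type*}

/-- The action of a permutation on a simple graph by relabelling vertices. -/
instance permGraphAction : MulAction (Equiv.Perm V) (SimpleGraph V) where
  smul σ H := H.map σ.toEmbedding
  one_smul H := by
    show H.map (1 : Equiv.Perm V).toEmbedding = H
    ext a b
    simp [SimpleGraph.map_adj]
  mul_smul σ τ H := by
    ext a b
    show (H.map (σ * τ).toEmbedding).Adj a b ↔ ((H.map τ.toEmbedding).map σ.toEmbedding).Adj a b
    simp only [SimpleGraph.map_adj', Equiv.coe_toEmbedding, Equiv.Perm.coe_mul,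
      Function.comp_apply]
    constructor
    · rintro ⟨hab, u, v, h, rfl, rfl⟩
      exact ⟨hab, τ u, τ v, ⟨fun e => h.ne (τ.injective e), u, v, h, rfl, rfl⟩, rfl, rfl⟩
    · rintro ⟨hab, -, -, ⟨-, u, v, h, rfl, rfl⟩, rfl, rfl⟩
      exact ⟨hab, u, v, h, rfl, rfl⟩

lemma perm_smul_graph (σ : Equiv.Perm V) (H : SimpleGraph V) :
    σ • H = H.map σ.toEmbedding := rfl

/-- A Hamiltonian cycle of the complete graph on `V`: a connected, 2-regular
(spanning) subgraph. -/
def IsHamCycle [Fintype V] (H : SimpleGraph V) : Prop :=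
  H.Connected ∧ ∀ v : V, (H.neighborSet v).ncard = 2

/-- A Hamiltonian cycle system: a set of Hamiltonian cycles whose edge sets
partition the edge set of the complete graph. -/
def IsHCS [Fintype V] (𝓗 : Set (SimpleGraph V)) : Prop :=
  (∀ H ∈ 𝓗, IsHamCycle H) ∧
    ∀ e ∈ (⊤ : SimpleGraph V).edgeSet, ∃! H, H ∈ 𝓗 ∧ e ∈ H.edgeSet

/-- The full automorphism group of a Hamiltonian cycle system, as the subgroup
of vertex permutations preserving the set of cycles. -/
def autHCS (𝓗 : Set (SimpleGraph V)) : Subgroup (Equiv.Perm V) :=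
  MulAction.stabilizer (Equiv.Perm V) 𝓗

/-- The cycle graph traced by a map from `ZMod m` (consecutive residues are adjacent). -/
def cycleOn {W : Type*} (m : ℕ) (f : ZMod m → W) : SimpleGraph W :=
  SimpleGraph.fromRel (fun a b => ∃ i : ZMod m, f i = a ∧ f (i + 1) = b)

/-- First-type cycle of the doubling construction, as a map `ZMod (4n+1) → {∞} ∪ ([2n]×{±1})`
(`none` is `∞`, `true` is sign `+1`). -/
def doubleT1 (n : ℕ) (A B : ZMod (2*n+1) → Option (Fin (2*n)))
    (k : ZMod (4*n+1)) : Option (Fin (2*n) × Bool) :=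
  if k.val = 0 then none
  else if k.val ≤ 2*n then (A ((k.val : ℕ) : ZMod (2*n+1))).map (fun x => (x, true))
  else (B (((4*n+1-k.val : ℕ)) : ZMod (2*n+1))).map (fun x => (x, false))

/-- Second-type cycle of the doubling construction. -/
def doubleT2 (n : ℕ) (C : ZMod (2*n+1) → Option (Fin (2*n)))
    (k : ZMod (4*n+1)) : Option (Fin (2*n) × Bool) :=
  if k.val = 0 then none
  else if k.val ≤ 2*n then
    (C (((2*n+1-k.val : ℕ)) : ZMod (2*n+1))).map (fun x => (x, decide (k.val % 2 = 1)))
  else (C (((k.val - 2*n : ℕ)) : ZMod (2*n+1))).map (fun x => (x, decide ((k.val - 2*n) % 2 = 1)))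

/-!
Call a vertex `u` special if, in every cycle through `u`, the two neighbours of `u` form the
middle edge of some cycle whose vertex opposite that edge is `u` (both ends at distance `2n`
from `u`). Automorphisms preserve this, and `∞` is special: its neighbours `z, z'` in a cycle
form the middle edge of the partner cycle.

No other vertex `v` is special. Write `[z]` for the pair `{z, z'}`. In each cycle `K` the
neighbours of `∞` form a class `ν K` and the middle edge a class `μ K`, and `ν K`, `μ K` are the
two neighbours of `∞` in one cycle of the third input system; as that system is a Hamiltonian
cycle system, `ν K = μ K'` forces `ν K' = μ K`. Take a cycle `K` in which `v` is adjacent to `∞`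
and let `q` be the other neighbour of `v`. A cycle `K'` containing the edge `∞ q` opposite `v`
has `[v] = μ K'` and `[q] = ν K'`; since `[v] = ν K`, this gives `[q] = μ K`. But `q` is two
steps away from `∞` in `K`, and for `n > 1` no vertex there lies in the class `μ K`.
-/

open Function SimpleGraph

section GraphTransport

variable {W : Type*} {G : SimpleGraph V} {G' : SimpleGraph W}

theorem SimpleGraph.Hom.edist_le (φ : G →g G') (u v : V) :
    G'.edist (φ u) (φ v) ≤ G.edist u v :=
  le_iInf fun p => (SimpleGraph.edist_le (p.map φ)).trans_eq (by rw [Walk.length_map])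

theorem SimpleGraph.Iso.dist_eq (φ : G ≃g G') (u v : V) :
    G'.dist (φ u) (φ v) = G.dist u v := by
  have h := φ.symm.toHom.edist_le (φ u) (φ v)
  simp only [RelEmbedding.coe_toRelHom, RelIso.coe_toRelEmbedding, RelIso.symm_apply_apply]
    at h
  exact congrArg ENat.toNat (le_antisymm (φ.toHom.edist_le u v) h)

theorem perm_smul_adj (σ : Equiv.Perm V) (G : SimpleGraph V) (a b : V) :
    (σ • G).Adj a b ↔ G.Adj (σ⁻¹ a) (σ⁻¹ b) := by
  rw [perm_smul_graph]
  simpa using (Iso.map σ G).map_adj_iff (v := σ⁻¹ a) (w := σ⁻¹ b)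

theorem perm_smul_dist (σ : Equiv.Perm V) (G : SimpleGraph V) (a b : V) :
    (σ • G).dist a b = G.dist (σ⁻¹ a) (σ⁻¹ b) := by
  rw [perm_smul_graph]
  simpa using (Iso.map σ G).dist_eq (σ⁻¹ a) (σ⁻¹ b)

end GraphTransport

section Special

def IsSpecial (𝓗 : Set (SimpleGraph V)) (d : ℕ) (u : V) : Prop :=
  ∀ K ∈ 𝓗, ∀ p q, p ≠ q → K.Adj u p → K.Adj u q →
    ∃ K' ∈ 𝓗, K'.Adj p q ∧ d ≤ K'.dist u p ∧ d ≤ K'.dist u q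

theorem IsSpecial.perm_apply {𝓗 : Set (SimpleGraph V)} {d : ℕ} {u : V} {σ : Equiv.Perm V}
    (hσ : σ ∈ autHCS 𝓗) (h : IsSpecial 𝓗 d u) : IsSpecial 𝓗 d (σ u) := by
  have hσ𝓗 : σ • 𝓗 = 𝓗 := hσ
  have hσ𝓗' : σ⁻¹ • 𝓗 = 𝓗 := inv_smul_eq_iff.2 hσ𝓗.symm
  intro K hK p q hpq hp hq
  obtain ⟨K', hK', hadj, hdp, hdq⟩ := h (σ⁻¹ • K) (hσ𝓗' ▸ Set.smul_mem_smul_set hK)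
    (σ⁻¹ p) (σ⁻¹ q) (by simpa using hpq) (by simpa [perm_smul_adj] using hp)
    (by simpa [perm_smul_adj] using hq)
  exact ⟨σ • K', hσ𝓗 ▸ Set.smul_mem_smul_set hK', by simpa [perm_smul_adj] using hadj,
    by simpa [perm_smul_dist] using hdp, by simpa [perm_smul_dist] using hdq⟩

end Special

section CycleOn

variable {m : ℕ} {f : ZMod m → V}

theorem cycleOn_adj_apply_of_sub (hf : Injective f) (h1 : (1 : ZMod m) ≠ 0) {i j : ZMod m}
    (h : j - i = 1 ∨ j - i = -1) : (cycleOn m f).Adj (f i) (f j) := by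
  refine (fromRel_adj _ _ _).2 ⟨hf.ne ?_, ?_⟩
  · rintro rfl
    rw [sub_self] at h
    exact h.elim (fun h => h1 h.symm) fun h => h1 (neg_eq_zero.1 h.symm)
  · rcases h with h | h
    · exact Or.inl ⟨i, rfl, by rw [← h, add_sub_cancel]⟩
    · exact Or.inr ⟨j, rfl, by rw [show j + 1 = i by linear_combination h]⟩

theorem eq_of_cycleOn_adj (hf : Injective f) {i : ZMod m} {x : V}
    (h : (cycleOn m f).Adj (f i) x) : x = f (i + 1) ∨ x = f (i - 1) := by
  obtain ⟨-, ⟨l, hl, rfl⟩ | ⟨l, rfl, hl⟩⟩ := (fromRel_adj _ _ _).1 h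
  · exact Or.inl (by rw [hf hl])
  · exact Or.inr (by rw [← hf hl, add_sub_cancel_right])

theorem exists_cycleOn_walk_length_eq (hf : Injective f) (h1 : (1 : ZMod m) ≠ 0) (a : ZMod m)
    (ℓ : ℕ) : ∃ w : (cycleOn m f).Walk (f a) (f (a + ℓ)), w.length = ℓ := by
  induction ℓ generalizing a with
  | zero => exact ⟨Walk.nil.copy rfl (by simp), by simp⟩
  | succ ℓ ih =>
    obtain ⟨w, hw⟩ := ih (a + 1)
    refine ⟨(Walk.cons (cycleOn_adj_apply_of_sub hf h1 (by simp)) w).copy rfl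
      (by push_cast; ring_nf), by simp [hw]⟩

theorem exists_sub_eq_of_cycleOn_walk (hf : Injective f) {x y : V} (w : (cycleOn m f).Walk x y)
    {a b : ZMod m} (ha : x = f a) (hb : y = f b) :
    ∃ s t : ℕ, s + t = w.length ∧ b - a = s - t := by
  induction w generalizing a with
  | nil => exact ⟨0, 0, rfl, by rw [hf (hb.symm.trans ha)]; simp⟩
  | cons hadj w ih =>
    subst ha
    rcases eq_of_cycleOn_adj hf hadj with rfl | rfl
    · obtain ⟨s, t, hst, h⟩ := ih rfl hb
      exact ⟨s + 1, t, by simp; omega, by push_cast; linear_combination h⟩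
    · obtain ⟨s, t, hst, h⟩ := ih rfl hb
      exact ⟨s, t + 1, by simp; omega, by push_cast; linear_combination h⟩

theorem cycleOn_dist_apply (hm : 1 < m) (hf : Injective f) (a b : ZMod m) :
    (cycleOn m f).dist (f a) (f b) = min (b - a).val (a - b).val := by
  have : NeZero m := ⟨by omega⟩
  have : Fact (1 < m) := ⟨hm⟩
  have walk (x y : ZMod m) : ∃ w : (cycleOn m f).Walk (f x) (f y), w.length = (y - x).val := by
    obtain ⟨w, hw⟩ := exists_cycleOn_walk_length_eq hf one_ne_zero x (y - x).val
    exact ⟨w.copy rfl (by simp), by simp [hw]⟩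
  obtain ⟨w₁, hw₁⟩ := walk a b
  obtain ⟨w₂, hw₂⟩ := walk b a
  apply le_antisymm
  · exact le_min (hw₁ ▸ dist_le w₁) (SimpleGraph.dist_comm.trans_le (hw₂ ▸ dist_le w₂))
  obtain ⟨w, hw⟩ := (Walk.reachable w₁).exists_walk_length_eq_dist
  obtain ⟨s, t, hst, h⟩ := exists_sub_eq_of_cycleOn_walk hf w rfl rfl
  have val_le {c : ZMod m} {r : ℕ} (hc : c = r) (hr : r ≤ s + t) : c.val ≤ s + t :=
    hc ▸ (ZMod.val_natCast m r).trans_le ((Nat.mod_le _ _).trans hr)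
  rw [← hw, ← hst]
  rcases le_total t s with hts | hst
  · exact (min_le_left _ _).trans (val_le (by rw [h, Nat.cast_sub hts]) (by omega))
  · exact (min_le_right _ _).trans
      (val_le (by rw [Nat.cast_sub hst]; linear_combination -h) (by omega))

end CycleOn

section MiddleEdge

variable {α : Type*} {m k : ℕ}

theorem le_cycleOn_dist_iff {f : ZMod m → V} (hm : m = 2 * k + 1) (hk : 0 < k)
    (hf : Injective f) (a b : ZMod m) :
    k ≤ (cycleOn m f).dist (f a) (f b) ↔ b - a = k ∨ b - a = k + 1 := by
  subst hm
  have hk₁ : ((k : ℕ) : ZMod (2 * k + 1)).val = k := ZMod.val_cast_of_lt (by omega)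
  have hk₂ : ((k : ZMod (2 * k + 1)) + 1).val = k + 1 := by
    rw [← Nat.cast_succ]; exact ZMod.val_cast_of_lt (by omega)
  have hd := ZMod.val_lt (b - a)
  rw [cycleOn_dist_apply (by omega) hf, ← (ZMod.val_injective _).eq_iff, hk₁,
    ← (ZMod.val_injective _).eq_iff, hk₂, ← neg_sub b a, ZMod.neg_val]
  split_ifs with h0
  · simp only [h0, ZMod.val_zero]; omega
  · omega

theorem isSpecial_of_exists_mid_eq (hm : m = 2 * k + 1) (hk : 0 < k) {𝓕 : Set (ZMod m → V)}
    {o : V} (h𝓕 : ∀ f ∈ 𝓕, Injective f ∧ f 0 = o)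
    (hmid : ∀ f ∈ 𝓕, ∃ g ∈ 𝓕, s(g k, g (k + 1)) = s(f 1, f (-1))) :
    IsSpecial (cycleOn m '' 𝓕) k o := by
  have : Fact (1 < m) := ⟨by omega⟩
  rintro _ ⟨f, hf, rfl⟩ p q hpq hp hq
  obtain ⟨hfi, rfl⟩ := h𝓕 f hf
  obtain ⟨g, hg, hgf⟩ := hmid f hf
  obtain ⟨hgi, hg0⟩ := h𝓕 g hg
  have hnbr {x : V} (hx : (cycleOn m f).Adj (f 0) x) : x ∈ s(f 1, f (-1)) := by
    simpa using eq_of_cycleOn_adj hfi hx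
  have hpq' : s(p, q) = s(g k, g (k + 1)) :=
    hgf ▸ ((Sym2.mem_and_mem_iff hpq).1 ⟨hnbr hp, hnbr hq⟩).symm
  have hfar {x : V} (hx : x ∈ s(p, q)) : k ≤ (cycleOn m g).dist (f 0) x := by
    rw [hpq', Sym2.mem_iff] at hx
    rw [← hg0]
    rcases hx with rfl | rfl
    · exact (le_cycleOn_dist_iff hm hk hgi _ _).2 (Or.inl (sub_zero _))
    · exact (le_cycleOn_dist_iff hm hk hgi _ _).2 (Or.inr (sub_zero _))
  refine ⟨_, ⟨g, hg, rfl⟩, ?_, hfar (Sym2.mem_mk_left p q), hfar (Sym2.mem_mk_right p q)⟩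
  rw [← mem_edgeSet, hpq', mem_edgeSet]
  exact cycleOn_adj_apply_of_sub hgi one_ne_zero (Or.inl (add_sub_cancel_left _ _))

/-- `f` traces the cycle `o = f 0, f 1, …, f (2k)` and `cls` forgets signs, so that the
neighbours `f (±1)` of `o` and the middle edge `f k, f (k + 1)` each form a pair `{z, z'}`. -/
structure IsDoubledCycle (o : V) (cls : V → α) (k : ℕ) (f : ZMod m → V) : Prop where
  bijective : Bijective f
  apply_zero : f 0 = o
  cls_neg_one : cls (f (-1)) = cls (f 1)
  cls_succ : cls (f (k + 1)) = cls (f k)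
  cls_two_ne : cls (f 2) ≠ cls (f k)
  cls_neg_two_ne : cls (f (-2)) ≠ cls (f k)

theorem not_isSpecial_of_isDoubledCycle (hm : m = 2 * k + 1) (hk : 0 < k)
    {𝓕 : Set (ZMod m → V)} {o : V} {cls : V → α} (hshape : ∀ f ∈ 𝓕, IsDoubledCycle o cls k f)
    (hpair : ∀ f ∈ 𝓕, ∀ g ∈ 𝓕, cls (f 1) = cls (g k) → cls (g 1) = cls (f k))
    {v : V} (hv : ∃ f ∈ 𝓕, f 1 = v ∨ f (-1) = v) : ¬ IsSpecial (cycleOn m '' 𝓕) k v := by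
  have : Fact (1 < m) := ⟨by omega⟩
  have h2 : (2 : ZMod m) ≠ 0 := by
    rw [← Nat.cast_ofNat, Ne, ZMod.natCast_eq_zero_iff]
    exact Nat.not_dvd_of_pos_of_lt two_pos (by omega)
  intro hsp
  obtain ⟨f, hf, ε, hε, rfl⟩ : ∃ f ∈ 𝓕, ∃ ε : ZMod m, (ε = 1 ∨ ε = -1) ∧ f ε = v := by
    obtain ⟨f, hf, h | h⟩ := hv
    exacts [⟨f, hf, 1, Or.inl rfl, h⟩, ⟨f, hf, -1, Or.inr rfl, h⟩]
  have sf := hshape f hf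
  have hfi := sf.bijective.1
  obtain ⟨_, ⟨g, hg, rfl⟩, hadj, hdist, -⟩ := hsp _ ⟨f, hf, rfl⟩ (f 0) (f (2 * ε))
    (hfi.ne (by rcases hε with rfl | rfl <;> simp [h2, h2.symm]))
    (cycleOn_adj_apply_of_sub hfi one_ne_zero (by rcases hε with rfl | rfl <;> simp))
    (cycleOn_adj_apply_of_sub hfi one_ne_zero
      (by rcases hε with rfl | rfl <;> ring_nf <;> simp))
  have sg := hshape g hg
  rw [sf.apply_zero, ← sg.apply_zero] at hadj hdist
  obtain ⟨j, hj⟩ := sg.bijective.2 (f ε)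
  rw [← hj, SimpleGraph.dist_comm, le_cycleOn_dist_iff hm hk sg.bijective.1, sub_zero]
    at hdist
  have hfε : cls (f ε) = cls (f 1) := by
    rcases hε with rfl | rfl
    exacts [rfl, sf.cls_neg_one]
  have hgj : cls (g j) = cls (g k) := by
    rcases hdist with rfl | rfl
    exacts [rfl, sg.cls_succ]
  have hq : cls (f (2 * ε)) = cls (g 1) := by
    rcases eq_of_cycleOn_adj sg.bijective.1 hadj with h | h <;> simp [h, sg.cls_neg_one]
  have hf2 : cls (f (2 * ε)) ≠ cls (f k) := by
    rcases hε with rfl | rfl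
    · simpa using sf.cls_two_ne
    · simpa using sf.cls_neg_two_ne
  exact hf2 (hq.trans (hpair f hf g hg (hfε.symm.trans (hj ▸ hgj))))

end MiddleEdge

section HamiltonianCycleSystem

variable {ι : Type*} [Fintype V] {m : ℕ} {C : ι → ZMod m → V} {o : V}

theorem exists_apply_eq_of_isHCS (hHC : IsHCS (Set.range fun i => cycleOn m (C i)))
    (hC : ∀ i, Injective (C i)) (hC0 : ∀ i, C i 0 = o) {x : V} (hx : x ≠ o) :
    ∃ i, C i 1 = x ∨ C i (-1) = x := by
  obtain ⟨_, ⟨⟨i, rfl⟩, he⟩, -⟩ := hHC.2 s(o, x) (by simpa using hx.symm)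
  rw [mem_edgeSet, ← hC0 i] at he
  exact ⟨i, by simpa [eq_comm] using eq_of_cycleOn_adj (hC i) he⟩

theorem apply_neg_eq_of_isHCS (hm : 2 < m) (hHC : IsHCS (Set.range fun i => cycleOn m (C i)))
    (hC : ∀ i, Injective (C i)) (hC0 : ∀ i, C i 0 = o) {i j : ι} {a b : ZMod m}
    (ha : a = 1 ∨ a = -1) (hb : b = 1 ∨ b = -1) (hab : C i a = C j b) :
    C i (-a) = C j (-b) := by
  have : Fact (1 < m) := ⟨by omega⟩
  have : Fact (2 < m) := ⟨hm⟩
  have hadj (l : ι) {c : ZMod m} (hc : c = 1 ∨ c = -1) : (cycleOn m (C l)).Adj o (C l c) := by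
    rw [← hC0 l]; exact cycleOn_adj_apply_of_sub (hC l) one_ne_zero (by simpa using hc)
  obtain ⟨_, -, huniq⟩ := hHC.2 s(o, C i a) (hadj i ha).ne
  have hij : cycleOn m (C i) = cycleOn m (C j) :=
    (huniq _ ⟨⟨i, rfl⟩, hadj i ha⟩).trans (huniq _ ⟨⟨j, rfl⟩, hab ▸ hadj j hb⟩).symm
  have hne : C i (-a) ≠ C j b := hab ▸ (hC i).ne (by
    rcases ha with rfl | rfl <;> simp [ZMod.neg_one_ne_one, ZMod.neg_one_ne_one.symm])
  have h := hadj i (c := -a) (by rcases ha with rfl | rfl <;> simp)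
  rw [hij, ← hC0 j] at h
  have h' : C i (-a) = C j b ∨ C i (-a) = C j (-b) := by
    rcases hb with rfl | rfl <;> simpa [or_comm] using eq_of_cycleOn_adj (hC j) h
  exact h'.resolve_left hne

end HamiltonianCycleSystem

section Doubling

theorem natCast_eq_neg {m a b : ℕ} (h : a + b = m) : ((a : ℕ) : ZMod m) = -(b : ZMod m) :=
  eq_neg_of_add_eq_zero_left (by rw [← Nat.cast_add, h, ZMod.natCast_self])

theorem natCast_ne_neg_natCast {m a b : ℕ} (h₀ : 0 < a + b) (h : a + b < m) :
    ((a : ℕ) : ZMod m) ≠ -(b : ZMod m) := by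
  rw [Ne, eq_neg_iff_add_eq_zero, ← Nat.cast_add, ZMod.natCast_eq_zero_iff]
  exact Nat.not_dvd_of_pos_of_lt h₀ h

theorem val_pos_of_apply_eq_some {m : ℕ} {β : Type*} {F : ZMod m → Option β} (h0 : F 0 = none)
    {z : ZMod m} {x : β} (hz : F z = some x) : 0 < z.val :=
  Nat.pos_of_ne_zero ((ZMod.val_ne_zero z).2 (by rintro rfl; simp [h0] at hz))

theorem map_fst_map_pair {β γ : Type*} (x : Option β) (c : γ) :
    ((x.map fun y => (y, c)).map Prod.fst) = x := by
  cases x <;> rfl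

variable {n : ℕ} (A B C : ZMod (2 * n + 1) → Option (Fin (2 * n)))

theorem doubleT1_zero : doubleT1 n A B 0 = none := by simp [doubleT1]

theorem doubleT2_zero : doubleT2 n C 0 = none := by simp [doubleT2]

theorem doubleT1_natCast_of_le {j : ℕ} (h₀ : 0 < j) (hj : j ≤ 2 * n) :
    doubleT1 n A B j = (A j).map (·, true) := by
  rw [doubleT1, ZMod.val_cast_of_lt (by omega), if_neg h₀.ne', if_pos hj]

theorem doubleT1_natCast_of_lt {j : ℕ} (hj : 2 * n < j) (hj' : j ≤ 4 * n) :
    doubleT1 n A B j = (B ((4 * n + 1 - j : ℕ))).map (·, false) := by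
  rw [doubleT1, ZMod.val_cast_of_lt (by omega), if_neg (by omega), if_neg (by omega)]

theorem doubleT2_natCast_of_le {j : ℕ} (h₀ : 0 < j) (hj : j ≤ 2 * n) :
    doubleT2 n C j = (C ((2 * n + 1 - j : ℕ))).map (·, decide (j % 2 = 1)) := by
  rw [doubleT2, ZMod.val_cast_of_lt (by omega), if_neg h₀.ne', if_pos hj]

theorem doubleT2_natCast_of_lt {j : ℕ} (hj : 2 * n < j) (hj' : j ≤ 4 * n) :
    doubleT2 n C j = (C ((j - 2 * n : ℕ))).map (·, decide ((j - 2 * n) % 2 = 1)) := by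
  rw [doubleT2, ZMod.val_cast_of_lt (by omega), if_neg (by omega), if_neg (by omega)]

variable {A B C}

theorem doubleT1_surjective (hA : Surjective A) (hB : Surjective B)
    (hA0 : A 0 = none) (hB0 : B 0 = none) : Surjective (doubleT1 n A B) := by
  rintro (_ | ⟨x, _ | _⟩)
  · exact ⟨0, doubleT1_zero A B⟩
  · obtain ⟨z, hz⟩ := hB (some x)
    have := val_pos_of_apply_eq_some hB0 hz
    have := ZMod.val_lt z
    refine ⟨((4 * n + 1 - z.val : ℕ) : ZMod (4 * n + 1)), ?_⟩
    rw [doubleT1_natCast_of_lt A B (by omega) (by omega),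
      show 4 * n + 1 - (4 * n + 1 - z.val) = z.val by omega, ZMod.natCast_zmod_val, hz]
    rfl
  · obtain ⟨z, hz⟩ := hA (some x)
    have := val_pos_of_apply_eq_some hA0 hz
    have := ZMod.val_lt z
    refine ⟨(z.val : ZMod (4 * n + 1)), ?_⟩
    rw [doubleT1_natCast_of_le A B (by omega) (by omega), ZMod.natCast_zmod_val, hz]
    rfl

theorem doubleT2_surjective (hC : Surjective C) (hC0 : C 0 = none) :
    Surjective (doubleT2 n C) := by
  rintro (_ | ⟨x, s⟩)
  · exact ⟨0, doubleT2_zero C⟩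
  obtain ⟨z, hz⟩ := hC (some x)
  have := val_pos_of_apply_eq_some hC0 hz
  have := ZMod.val_lt z
  -- `x` occurs at the positions `2n + 1 - z.val` and `z.val + 2n`, which have opposite parities
  by_cases hs : decide (z.val % 2 = 1) = s
  · refine ⟨((z.val + 2 * n : ℕ) : ZMod (4 * n + 1)), ?_⟩
    rw [doubleT2_natCast_of_lt C (by omega) (by omega), Nat.add_sub_cancel,
      ZMod.natCast_zmod_val, hz, hs]
    rfl
  · refine ⟨((2 * n + 1 - z.val : ℕ) : ZMod (4 * n + 1)), ?_⟩
    rw [doubleT2_natCast_of_le C (by omega) (by omega),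
      show 2 * n + 1 - (2 * n + 1 - z.val) = z.val by omega, ZMod.natCast_zmod_val, hz]
    cases s <;> simp at hs ⊢ <;> omega

theorem doubleT1_bijective (hA : Surjective A) (hB : Surjective B)
    (hA0 : A 0 = none) (hB0 : B 0 = none) : Bijective (doubleT1 n A B) :=
  (Fintype.bijective_iff_surjective_and_card _).2
    ⟨doubleT1_surjective hA hB hA0 hB0, by simp; ring⟩

theorem doubleT2_bijective (hC : Surjective C) (hC0 : C 0 = none) :
    Bijective (doubleT2 n C) :=
  (Fintype.bijective_iff_surjective_and_card _).2 ⟨doubleT2_surjective hC hC0, by simp; ring⟩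

theorem natCast_four_mul (n : ℕ) : ((4 * n : ℕ) : ZMod (4 * n + 1)) = -1 := by
  simpa using natCast_eq_neg (m := 4 * n + 1) (b := 1) rfl

theorem natCast_four_mul_sub_one {n : ℕ} (hn : 0 < n) :
    ((4 * n - 1 : ℕ) : ZMod (4 * n + 1)) = -2 := by
  simpa using natCast_eq_neg (m := 4 * n + 1) (b := 2) (by omega)

theorem natCast_two_mul (n : ℕ) : ((2 * n : ℕ) : ZMod (2 * n + 1)) = -1 := by
  simpa using natCast_eq_neg (m := 2 * n + 1) (b := 1) rfl

theorem natCast_two_mul_sub_one {n : ℕ} (hn : 0 < n) :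
    ((2 * n - 1 : ℕ) : ZMod (2 * n + 1)) = -2 := by
  simpa using natCast_eq_neg (m := 2 * n + 1) (b := 2) (by omega)

theorem doubleT1_one (hn : 0 < n) : doubleT1 n A B 1 = (A 1).map (·, true) := by
  simpa using doubleT1_natCast_of_le A B (j := 1) one_pos (by omega)

theorem doubleT1_two (hn : 0 < n) : doubleT1 n A B 2 = (A 2).map (·, true) := by
  simpa using doubleT1_natCast_of_le A B (j := 2) two_pos (by omega)

theorem doubleT1_neg_one (hn : 0 < n) : doubleT1 n A B (-1) = (B 1).map (·, false) := by
  have h := doubleT1_natCast_of_lt A B (j := 4 * n) (by omega) le_rfl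
  rwa [natCast_four_mul, Nat.add_sub_cancel_left, Nat.cast_one] at h

theorem doubleT1_neg_two (hn : 0 < n) : doubleT1 n A B (-2) = (B 2).map (·, false) := by
  have h := doubleT1_natCast_of_lt A B (j := 4 * n - 1) (by omega) (by omega)
  rwa [natCast_four_mul_sub_one hn, show 4 * n + 1 - (4 * n - 1) = 2 by omega,
    Nat.cast_ofNat] at h

theorem doubleT1_mid (hn : 0 < n) :
    doubleT1 n A B (2 * n : ℕ) = (A (-1)).map (·, true) := by
  rw [doubleT1_natCast_of_le A B (by omega) le_rfl, natCast_two_mul]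

theorem doubleT1_mid_succ (hn : 0 < n) :
    doubleT1 n A B ((2 * n : ℕ) + 1) = (B (-1)).map (·, false) := by
  rw [← Nat.cast_succ, doubleT1_natCast_of_lt A B (by omega) (by omega),
    show 4 * n + 1 - (2 * n).succ = 2 * n by omega, natCast_two_mul]

theorem doubleT2_one (hn : 0 < n) : doubleT2 n C 1 = (C (-1)).map (·, true) := by
  have h := doubleT2_natCast_of_le C (j := 1) one_pos (by omega)
  rwa [Nat.add_sub_cancel, natCast_two_mul, Nat.cast_one] at h

theorem doubleT2_two (hn : 0 < n) : doubleT2 n C 2 = (C (-2)).map (·, false) := by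
  have h := doubleT2_natCast_of_le C (j := 2) two_pos (by omega)
  rwa [show 2 * n + 1 - 2 = 2 * n - 1 by omega, natCast_two_mul_sub_one hn, Nat.cast_ofNat] at h

theorem doubleT2_neg_one (hn : 0 < n) : doubleT2 n C (-1) = (C (-1)).map (·, false) := by
  have h := doubleT2_natCast_of_lt C (j := 4 * n) (by omega) le_rfl
  rwa [natCast_four_mul, show 4 * n - 2 * n = 2 * n by omega, natCast_two_mul,
    Nat.mul_mod_right] at h

theorem doubleT2_neg_two (hn : 0 < n) : doubleT2 n C (-2) = (C (-2)).map (·, true) := by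
  have h := doubleT2_natCast_of_lt C (j := 4 * n - 1) (by omega) (by omega)
  rwa [natCast_four_mul_sub_one hn, show 4 * n - 1 - 2 * n = 2 * n - 1 by omega,
    natCast_two_mul_sub_one hn, show (2 * n - 1) % 2 = 1 by omega] at h

theorem doubleT2_mid (hn : 0 < n) : doubleT2 n C (2 * n : ℕ) = (C 1).map (·, false) := by
  have h := doubleT2_natCast_of_le C (j := 2 * n) (by omega) le_rfl
  rwa [show 2 * n + 1 - 2 * n = 1 by omega, Nat.cast_one, Nat.mul_mod_right] at h

theorem doubleT2_mid_succ (hn : 0 < n) :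
    doubleT2 n C ((2 * n : ℕ) + 1) = (C 1).map (·, true) := by
  have h := doubleT2_natCast_of_lt C (j := 2 * n + 1) (by omega) (by omega)
  rwa [Nat.cast_succ, Nat.add_sub_cancel_left, Nat.cast_one] at h

end Doubling

section DoublingSystem

variable {n : ℕ} {ι : Type*} {A B C : ι → ZMod (2 * n + 1) → Option (Fin (2 * n))}

def doublingMaps (n : ℕ) {ι : Type*} (A B C : ι → ZMod (2 * n + 1) → Option (Fin (2 * n))) :
    Set (ZMod (4 * n + 1) → Option (Fin (2 * n) × Bool)) :=
  Set.range (fun i => doubleT1 n (A i) (B i)) ∪ Set.range (fun i => doubleT2 n (C i))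

theorem isDoubledCycle_doubleT1 (hn : 1 < n) {A B : ZMod (2 * n + 1) → Option (Fin (2 * n))}
    (hA : Bijective A) (hB : Bijective B) (hA0 : A 0 = none) (hB0 : B 0 = none)
    (h₁ : A 1 = B 1) (h₂ : A (-1) = B (-1)) :
    IsDoubledCycle none (Option.map Prod.fst) (2 * n) (doubleT1 n A B) := by
  have h : (2 : ZMod (2 * n + 1)) ≠ -1 := by
    simpa using natCast_ne_neg_natCast (m := 2 * n + 1) (a := 2) (b := 1) (by omega) (by omega)
  have hn₀ : 0 < n := by omega
  refine ⟨doubleT1_bijective hA.2 hB.2 hA0 hB0, doubleT1_zero A B, ?_, ?_, ?_, ?_⟩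
  · simp only [doubleT1_neg_one hn₀, doubleT1_one hn₀, map_fst_map_pair, h₁]
  · simp only [doubleT1_mid_succ hn₀, doubleT1_mid hn₀, map_fst_map_pair, h₂]
  · simpa only [doubleT1_two hn₀, doubleT1_mid hn₀, map_fst_map_pair] using hA.1.ne h
  · simpa only [doubleT1_neg_two hn₀, doubleT1_mid hn₀, map_fst_map_pair, h₂] using hB.1.ne h

theorem isDoubledCycle_doubleT2 (hn : 1 < n) {C : ZMod (2 * n + 1) → Option (Fin (2 * n))}
    (hC : Bijective C) (hC0 : C 0 = none) :
    IsDoubledCycle none (Option.map Prod.fst) (2 * n) (doubleT2 n C) := by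
  have h : C (-2) ≠ C 1 := hC.1.ne (by
    simpa using (natCast_ne_neg_natCast (m := 2 * n + 1) (a := 1) (b := 2) (by omega)
      (by omega)).symm)
  have hn₀ : 0 < n := by omega
  refine ⟨doubleT2_bijective hC.2 hC0, doubleT2_zero C, ?_, ?_, ?_, ?_⟩
  · simp only [doubleT2_neg_one hn₀, doubleT2_one hn₀, map_fst_map_pair]
  · simp only [doubleT2_mid_succ hn₀, doubleT2_mid hn₀, map_fst_map_pair]
  · simpa only [doubleT2_two hn₀, doubleT2_mid hn₀, map_fst_map_pair] using h
  · simpa only [doubleT2_neg_two hn₀, doubleT2_mid hn₀, map_fst_map_pair] using h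

theorem exists_mid_eq_of_mem_doublingMaps (hn : 0 < n)
    (hfirst : ∀ i, A i 1 = B i 1 ∧ B i 1 = C i 1)
    (hlast : ∀ i, A i (-1) = B i (-1) ∧ B i (-1) = C i (-1)) :
    ∀ f ∈ doublingMaps n A B C, ∃ g ∈ doublingMaps n A B C,
      s(g (2 * n : ℕ), g ((2 * n : ℕ) + 1)) = s(f 1, f (-1)) := by
  rintro _ (⟨i, rfl⟩ | ⟨i, rfl⟩)
  · refine ⟨_, Or.inr ⟨i, rfl⟩, ?_⟩
    simp only [doubleT2_mid hn, doubleT2_mid_succ hn, doubleT1_one hn, doubleT1_neg_one hn,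
      (hfirst i).1, (hfirst i).2]
    exact Sym2.eq_swap
  · refine ⟨_, Or.inl ⟨i, rfl⟩, ?_⟩
    simp only [doubleT1_mid hn, doubleT1_mid_succ hn, doubleT2_one hn, doubleT2_neg_one hn,
      (hlast i).1, (hlast i).2]

theorem exists_mem_doublingMaps_apply_eq (hn : 0 < n)
    (hC : ∀ i, Injective (C i)) (hC0 : ∀ i, C i 0 = none)
    (hHC : IsHCS (Set.range fun i => cycleOn (2 * n + 1) (C i)))
    (hfirst : ∀ i, A i 1 = B i 1 ∧ B i 1 = C i 1) {v : Option (Fin (2 * n) × Bool)}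
    (hv : v ≠ none) : ∃ f ∈ doublingMaps n A B C, f 1 = v ∨ f (-1) = v := by
  obtain ⟨⟨x, s⟩, rfl⟩ := Option.ne_none_iff_exists'.1 hv
  obtain ⟨i, hi | hi⟩ := exists_apply_eq_of_isHCS hHC hC hC0 (Option.some_ne_none x)
  · refine ⟨_, Or.inl ⟨i, rfl⟩, ?_⟩
    simp only [doubleT1_one hn, doubleT1_neg_one hn, (hfirst i).1, (hfirst i).2, hi]
    cases s <;> simp
  · refine ⟨_, Or.inr ⟨i, rfl⟩, ?_⟩
    simp only [doubleT2_one hn, doubleT2_neg_one hn, hi]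
    cases s <;> simp

theorem exists_map_fst_eq_of_mem_doublingMaps (hn : 0 < n)
    (hfirst : ∀ i, A i 1 = B i 1 ∧ B i 1 = C i 1)
    (hlast : ∀ i, A i (-1) = B i (-1) ∧ B i (-1) = C i (-1)) :
    ∀ f ∈ doublingMaps n A B C, ∃ i, ∃ a : ZMod (2 * n + 1), (a = 1 ∨ a = -1) ∧
      (f 1).map Prod.fst = C i a ∧ (f (2 * n : ℕ)).map Prod.fst = C i (-a) := by
  rintro _ (⟨i, rfl⟩ | ⟨i, rfl⟩)
  · refine ⟨i, 1, Or.inl rfl, ?_, ?_⟩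
    · simp only [doubleT1_one hn, map_fst_map_pair, (hfirst i).1, (hfirst i).2]
    · simp only [doubleT1_mid hn, map_fst_map_pair, (hlast i).1, (hlast i).2]
  · refine ⟨i, -1, Or.inr rfl, ?_, ?_⟩
    · simp only [doubleT2_one hn, map_fst_map_pair]
    · simp only [doubleT2_mid hn, map_fst_map_pair, neg_neg]

theorem map_fst_apply_one_eq_of_mem_doublingMaps (hn : 0 < n) (hC : ∀ i, Injective (C i))
    (hC0 : ∀ i, C i 0 = none) (hHC : IsHCS (Set.range fun i => cycleOn (2 * n + 1) (C i)))
    (hfirst : ∀ i, A i 1 = B i 1 ∧ B i 1 = C i 1)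
    (hlast : ∀ i, A i (-1) = B i (-1) ∧ B i (-1) = C i (-1)) :
    ∀ f ∈ doublingMaps n A B C, ∀ g ∈ doublingMaps n A B C,
      (f 1).map Prod.fst = (g (2 * n : ℕ)).map Prod.fst →
        (g 1).map Prod.fst = (f (2 * n : ℕ)).map Prod.fst := by
  intro f hf g hg h
  obtain ⟨i, a, ha, hf₁, hfk⟩ := exists_map_fst_eq_of_mem_doublingMaps hn hfirst hlast f hf
  obtain ⟨j, b, hb, hg₁, hgk⟩ := exists_map_fst_eq_of_mem_doublingMaps hn hfirst hlast g hg
  rw [hf₁, hgk] at h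
  rw [hg₁, hfk, apply_neg_eq_of_isHCS (by omega) hHC hC hC0 ha
    (by rcases hb with rfl | rfl <;> simp) h, neg_neg]

theorem isDoubledCycle_of_mem_doublingMaps (hn : 1 < n) (hA : ∀ i, Bijective (A i))
    (hB : ∀ i, Bijective (B i)) (hC : ∀ i, Bijective (C i)) (hA0 : ∀ i, A i 0 = none)
    (hB0 : ∀ i, B i 0 = none) (hC0 : ∀ i, C i 0 = none) (h₁ : ∀ i, A i 1 = B i 1)
    (h₂ : ∀ i, A i (-1) = B i (-1)) :
    ∀ f ∈ doublingMaps n A B C, IsDoubledCycle none (Option.map Prod.fst) (2 * n) f := by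
  rintro _ (⟨i, rfl⟩ | ⟨i, rfl⟩)
  · exact isDoubledCycle_doubleT1 hn (hA i) (hB i) (hA0 i) (hB0 i) (h₁ i) (h₂ i)
  · exact isDoubledCycle_doubleT2 hn (hC i) (hC0 i)

theorem image_cycleOn_doublingMaps :
    cycleOn (4 * n + 1) '' doublingMaps n A B C =
      (Set.range fun i => cycleOn (4 * n + 1) (doubleT1 n (A i) (B i))) ∪
        Set.range fun i => cycleOn (4 * n + 1) (doubleT2 n (C i)) := by
  rw [doublingMaps, Set.image_union, ← Set.range_comp, ← Set.range_comp]
  rfl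

end DoublingSystem

theorem doubling_aut_fixes_infty_general (n : ℕ) (hn : 1 < n)
    (A B C : Fin n → ZMod (2*n+1) → Option (Fin (2*n)))
    (hAbij : ∀ i, Function.Bijective (A i))
    (hBbij : ∀ i, Function.Bijective (B i))
    (hCbij : ∀ i, Function.Bijective (C i))
    (hA0 : ∀ i, A i 0 = none) (hB0 : ∀ i, B i 0 = none) (hC0 : ∀ i, C i 0 = none)
    (hHC : IsHCS (Set.range fun i => cycleOn (2*n+1) (C i)))
    (hfirst : ∀ i, A i 1 = B i 1 ∧ B i 1 = C i 1)
    (hlast : ∀ i, A i ((2*n : ℕ) : ZMod (2*n+1)) = B i ((2*n : ℕ) : ZMod (2*n+1)) ∧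
      B i ((2*n : ℕ) : ZMod (2*n+1)) = C i ((2*n : ℕ) : ZMod (2*n+1))) :
    ∀ σ : Equiv.Perm (Option (Fin (2*n) × Bool)),
      σ ∈ autHCS ((Set.range fun i : Fin n => cycleOn (4*n+1) (doubleT1 n (A i) (B i))) ∪
      (Set.range fun i : Fin n => cycleOn (4*n+1) (doubleT2 n (C i)))) → σ none = none := by
  intro σ hσ
  rw [← image_cycleOn_doublingMaps] at hσ
  simp only [natCast_two_mul] at hlast
  have hm : 4 * n + 1 = 2 * (2 * n) + 1 := by ring
  have hC := fun i => (hCbij i).1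
  have hshape := isDoubledCycle_of_mem_doublingMaps hn hAbij hBbij hCbij hA0 hB0 hC0
    (fun i => (hfirst i).1) (fun i => (hlast i).1)
  have hspecial := isSpecial_of_exists_mid_eq hm (by omega)
    (fun f hf => ⟨(hshape f hf).bijective.1, (hshape f hf).apply_zero⟩)
    (exists_mid_eq_of_mem_doublingMaps (by omega) hfirst hlast)
  by_contra hσ₀
  exact not_isSpecial_of_isDoubledCycle hm (by omega) hshape
    (map_fst_apply_one_eq_of_mem_doublingMaps (by omega) hC hC0 hHC hfirst hlast)
    (exists_mem_doublingMaps_apply_eq (by omega) hC hC0 hHC hfirst hσ₀)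
    (hspecial.perm_apply hσ)

/-- for `n > 1`, every automorphism of an HCS obtained by the doubling
construction fixes the vertex `∞` (here `none`). -/
theorem doubling_aut_fixes_infty (n : ℕ) (hn : 1 < n)
    (A B C : Fin n → ZMod (2*n+1) → Option (Fin (2*n)))
    (hAbij : ∀ i, Function.Bijective (A i))
    (hBbij : ∀ i, Function.Bijective (B i))
    (hCbij : ∀ i, Function.Bijective (C i))
    (hA0 : ∀ i, A i 0 = none) (hB0 : ∀ i, B i 0 = none) (hC0 : ∀ i, C i 0 = none)
    (hHA : IsHCS (Set.range fun i => cycleOn (2*n+1) (A i)))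
    (hHB : IsHCS (Set.range fun i => cycleOn (2*n+1) (B i)))
    (hHC : IsHCS (Set.range fun i => cycleOn (2*n+1) (C i)))
    (hfirst : ∀ i, A i 1 = B i 1 ∧ B i 1 = C i 1)
    (hlast : ∀ i, A i ((2*n : ℕ) : ZMod (2*n+1)) = B i ((2*n : ℕ) : ZMod (2*n+1)) ∧
      B i ((2*n : ℕ) : ZMod (2*n+1)) = C i ((2*n : ℕ) : ZMod (2*n+1))) :
    ∀ σ : Equiv.Perm (Option (Fin (2*n) × Bool)),
      σ ∈ autHCS ((Set.range fun i : Fin n => cycleOn (4*n+1) (doubleT1 n (A i) (B i))) ∪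
      (Set.range fun i : Fin n => cycleOn (4*n+1) (doubleT2 n (C i)))) → σ none = none :=
  doubling_aut_fixes_infty_general n hn A B C hAbij hBbij hCbij hA0 hB0 hC0 hHC hfirst hlast
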